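/- arXiv:1311.0913 — 3 statements merged into one kernel-verified Lean document; each statement's English description precedes it below -/
import Mathlib

section
/- In a two-player first-price game with a finite set of possible bids, any sequence of strict better-replies must be finite (i.e., the better-reply dynamics converge), and hence a pure Nash equilibrium exists. -/
/-- A two-player first-price game over a finite totally ordered set of bids `B`:
each player's payoff depends only on whether player 1 is the winner
(player 1 wins iff `b2 ≤ b1`, i.e. ties go to player 1) and on the winning bid. -/
structure FPGame (B : Type*) where
  u1 : Bool → B → ℝ
  u2 : Bool → B → ℝ

namespace FPGame

variable {B : Type*} [LinearOrder B]

/-- Player 1 wins on ties. -/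
def p1wins (b1 b2 : B) : Bool := decide (b2 ≤ b1)

/-- The winning bid. -/
def winBid (b1 b2 : B) : B := if b2 ≤ b1 then b1 else b2

/-- Payoff of player 1 at profile `(b1, b2)`. -/
def pay1 (G : FPGame B) (b1 b2 : B) : ℝ := G.u1 (p1wins b1 b2) (winBid b1 b2)

/-- Payoff of player 2 at profile `(b1, b2)`. -/
def pay2 (G : FPGame B) (b1 b2 : B) : ℝ := G.u2 (p1wins b1 b2) (winBid b1 b2)

/-- A strict better-reply: a unilateral change of one player's bid that strictly
increases that player's payoff. -/
def BetterReply (G : FPGame B) (p q : B × B) : Prop :=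
  (p.2 = q.2 ∧ G.pay1 p.1 p.2 < G.pay1 q.1 q.2) ∨
  (p.1 = q.1 ∧ G.pay2 p.1 p.2 < G.pay2 q.1 q.2)

/-- A pure Nash equilibrium. -/
def IsPNE (G : FPGame B) (p : B × B) : Prop :=
  (∀ b1', G.pay1 b1' p.2 ≤ G.pay1 p.1 p.2) ∧ (∀ b2', G.pay2 p.1 b2' ≤ G.pay2 p.1 p.2)

end FPGame

namespace FPAux

open FPGame

variable {B : Type*} [LinearOrder B]

lemma pay1_of_le (G : FPGame B) {b1 b2 : B} (h : b2 ≤ b1) : G.pay1 b1 b2 = G.u1 true b1 := by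
  simp [FPGame.pay1, FPGame.p1wins, FPGame.winBid, h]

lemma pay1_of_lt (G : FPGame B) {b1 b2 : B} (h : b1 < b2) : G.pay1 b1 b2 = G.u1 false b2 := by
  simp [FPGame.pay1, FPGame.p1wins, FPGame.winBid, not_le.2 h, h.not_ge]

lemma pay2_of_le (G : FPGame B) {b1 b2 : B} (h : b2 ≤ b1) : G.pay2 b1 b2 = G.u2 true b1 := by
  simp [FPGame.pay2, FPGame.p1wins, FPGame.winBid, h]

lemma pay2_of_lt (G : FPGame B) {b1 b2 : B} (h : b1 < b2) : G.pay2 b1 b2 = G.u2 false b2 := by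
  simp [FPGame.pay2, FPGame.p1wins, FPGame.winBid, not_le.2 h, h.not_ge]

/-- Invariant established by "up" transitions. -/
def J (G : FPGame B) (p : B × B) : Prop :=
  (p.2 ≤ p.1 → G.u1 false p.2 < G.u1 true p.1) ∧ (p.1 < p.2 → G.u2 true p.1 < G.u2 false p.2)

/-- Payoff of the winner. -/
def winPay (G : FPGame B) (p : B × B) : ℝ :=
  if p.2 ≤ p.1 then G.u1 true p.1 else G.u2 false p.2

/-- Potential increasing along "within" and "up" steps. -/
def phiUp (G : FPGame B) (p : B × B) : Lex (B × Lex (Bool × ℝ)) :=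
  toLex (min p.1 p.2, toLex (decide (p.1 < p.2), winPay G p))

/-- Potential increasing along "within" and "down" steps. -/
def phiDown (G : FPGame B) (p : B × B) : Lex (Bᵒᵈ × Lex (Bool × ℝ)) :=
  toLex (OrderDual.toDual (min p.1 p.2), toLex (decide (p.2 ≤ p.1), winPay G p))

lemma main1 (G : FPGame B) {p q : B × B} (h : G.BetterReply p q) (hJ : J G p) :
    J G q ∧ phiUp G p < phiUp G q := by
  obtain ⟨a1, a2⟩ := p
  obtain ⟨c1, c2⟩ := q
  rcases h with ⟨h2, hlt⟩ | ⟨h1, hlt⟩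
  · -- player 1 moves
    simp only at h2
    subst h2
    rcases le_or_gt a2 a1 with hw | hl <;> rcases le_or_gt a2 c1 with hw' | hl'
    · -- win → win
      rw [pay1_of_le G hw, pay1_of_le G hw'] at hlt
      constructor
      · exact ⟨fun _ => lt_trans (hJ.1 hw) hlt, fun hc => absurd hw' hc.not_ge⟩
      · simp only [phiUp, winPay, Prod.Lex.lt_iff]
        right
        refine ⟨by simp [min_eq_right hw, min_eq_right hw'], ?_⟩
        right
        simp [not_lt.2 hw, not_lt.2 hw', hw, hw', hlt]
    · -- win → lose : impossible under J
      rw [pay1_of_le G hw, pay1_of_lt G hl'] at hlt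
      exact absurd hlt (hJ.1 hw).asymm
    · -- lose → win (up, T21a)
      rw [pay1_of_lt G hl, pay1_of_le G hw'] at hlt
      constructor
      · exact ⟨fun _ => hlt, fun hc => absurd hw' hc.not_ge⟩
      · simp only [phiUp, Prod.Lex.lt_iff]
        left
        simp only [min_eq_left hl.le, min_eq_right hw']
        exact hl
    · -- lose → lose : impossible
      rw [pay1_of_lt G hl, pay1_of_lt G hl'] at hlt
      exact absurd hlt (lt_irrefl _)
  · -- player 2 moves
    simp only at h1
    subst h1
    rcases le_or_gt a2 a1 with hw | hl <;> rcases le_or_gt c2 a1 with hw' | hl'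
    · -- win → win : impossible
      rw [pay2_of_le G hw, pay2_of_le G hw'] at hlt
      exact absurd hlt (lt_irrefl _)
    · -- win → lose (up, T12b)
      rw [pay2_of_le G hw, pay2_of_lt G hl'] at hlt
      constructor
      · exact ⟨fun hc => absurd hl' hc.not_gt, fun _ => hlt⟩
      · simp only [phiUp, winPay, Prod.Lex.lt_iff]
        rcases lt_or_eq_of_le hw with hlt2 | heq
        · left
          simpa [min_eq_right hw, min_eq_left hl'.le] using hlt2
        · right
          subst heq
          refine ⟨by simp [min_eq_left hl'.le], ?_⟩
          left
          simp [hl', lt_irrefl]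
    · -- lose → win : impossible under J
      rw [pay2_of_lt G hl, pay2_of_le G hw'] at hlt
      exact absurd hlt (hJ.2 hl).asymm
    · -- lose → lose (within 2)
      rw [pay2_of_lt G hl, pay2_of_lt G hl'] at hlt
      constructor
      · exact ⟨fun hc => absurd hl' hc.not_gt, fun _ => lt_trans (hJ.2 hl) hlt⟩
      · simp only [phiUp, winPay, Prod.Lex.lt_iff]
        right
        refine ⟨by simp [min_eq_left hl.le, min_eq_left hl'.le], ?_⟩
        right
        simp [hl, hl', not_le.2 hl, not_le.2 hl', hlt]

lemma main2 (G : FPGame B) {p q : B × B} (h : G.BetterReply p q) :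
    phiDown G p < phiDown G q ∨ (J G q ∧ phiUp G p < phiUp G q) := by
  obtain ⟨a1, a2⟩ := p
  obtain ⟨c1, c2⟩ := q
  rcases h with ⟨h2, hlt⟩ | ⟨h1, hlt⟩
  · simp only at h2
    subst h2
    rcases le_or_gt a2 a1 with hw | hl <;> rcases le_or_gt a2 c1 with hw' | hl'
    · -- win → win (within 1) : phiDown increases
      rw [pay1_of_le G hw, pay1_of_le G hw'] at hlt
      left
      simp only [phiDown, winPay, Prod.Lex.lt_iff]
      right
      refine ⟨by simp [min_eq_right hw, min_eq_right hw'], ?_⟩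
      right
      simp [hw, hw', hlt]
    · -- win → lose (down, T12a) : min strictly decreases
      left
      simp only [phiDown, Prod.Lex.lt_iff]
      left
      simp only [min_eq_right hw, min_eq_left hl'.le, OrderDual.toDual_lt_toDual]
      exact hl'
    · -- lose → win (up, T21a)
      rw [pay1_of_lt G hl, pay1_of_le G hw'] at hlt
      right
      constructor
      · exact ⟨fun _ => hlt, fun hc => absurd hw' hc.not_ge⟩
      · simp only [phiUp, Prod.Lex.lt_iff]
        left
        simp only [min_eq_left hl.le, min_eq_right hw']
        exact hl
    · -- lose → lose : impossible
      rw [pay1_of_lt G hl, pay1_of_lt G hl'] at hlt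
      exact absurd hlt (lt_irrefl _)
  · simp only at h1
    subst h1
    rcases le_or_gt a2 a1 with hw | hl <;> rcases le_or_gt c2 a1 with hw' | hl'
    · -- win → win : impossible
      rw [pay2_of_le G hw, pay2_of_le G hw'] at hlt
      exact absurd hlt (lt_irrefl _)
    · -- win → lose (up, T12b)
      rw [pay2_of_le G hw, pay2_of_lt G hl'] at hlt
      right
      constructor
      · exact ⟨fun hc => absurd hl' hc.not_gt, fun _ => hlt⟩
      · simp only [phiUp, winPay, Prod.Lex.lt_iff]
        rcases lt_or_eq_of_le hw with hlt2 | heq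
        · left
          simpa [min_eq_right hw, min_eq_left hl'.le] using hlt2
        · right
          subst heq
          refine ⟨by simp [min_eq_left hl'.le], ?_⟩
          left
          simp [hl', lt_irrefl]
    · -- lose → win (down, T21b)
      left
      simp only [phiDown, winPay, Prod.Lex.lt_iff]
      rcases lt_or_eq_of_le hw' with hlt2 | heq
      · left
        simp only [min_eq_left hl.le, min_eq_right hw', OrderDual.toDual_lt_toDual]
        exact hlt2
      · right
        subst heq
        refine ⟨by simp [min_eq_left hl.le], ?_⟩
        left
        simp [hl, not_le.2 hl, lt_irrefl]
    · -- lose → lose (within 2) : phiDown increases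
      rw [pay2_of_lt G hl, pay2_of_lt G hl'] at hlt
      left
      simp only [phiDown, winPay, Prod.Lex.lt_iff]
      right
      refine ⟨by simp [min_eq_left hl.le, min_eq_left hl'.le], ?_⟩
      right
      simp [not_le.2 hl, not_le.2 hl', hlt]

lemma no_inf_chain {α γ : Type*} [Finite α] [Preorder γ] (f : α → γ) (s : ℕ → α)
    (h : ∀ n, f (s n) < f (s (n + 1))) : False := by
  have hsm : StrictMono (fun n => f (s n)) := strictMono_nat_of_lt_succ h
  obtain ⟨a, b, hne, heq⟩ := Finite.exists_ne_map_eq_of_infinite s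
  exact hne (hsm.injective (by simp [heq]))

end FPAux

/-- In a two-player first-price game with a finite set of possible
bids, any sequence of strict better-replies must be finite (there is no infinite
sequence of consecutive strict better-replies), and hence a pure Nash equilibrium
exists. -/
theorem stmt0 {B : Type*} [LinearOrder B] [Fintype B] [Nonempty B] (G : FPGame B) :
    (¬ ∃ seq : ℕ → B × B, ∀ n, G.BetterReply (seq n) (seq (n + 1))) ∧
    (∃ p : B × B, G.IsPNE p) := by
  have part1 : ¬ ∃ seq : ℕ → B × B, ∀ n, G.BetterReply (seq n) (seq (n + 1)) := by
    rintro ⟨seq, hseq⟩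
    by_cases hJ : ∃ m, FPAux.J G (seq m)
    · obtain ⟨m, hm⟩ := hJ
      have key : ∀ k, FPAux.J G (seq (m + k)) := by
        intro k
        induction k with
        | zero => exact hm
        | succ k ih =>
          exact (FPAux.main1 G (hseq (m + k)) ih).1
      exact FPAux.no_inf_chain (FPAux.phiUp G) (fun k => seq (m + k))
        (fun k => (FPAux.main1 G (hseq (m + k)) (key k)).2)
    · push_neg at hJ
      refine FPAux.no_inf_chain (FPAux.phiDown G) seq (fun n => ?_)
      rcases FPAux.main2 G (hseq n) with h | h
      · exact h
      · exact absurd h.1 (hJ (n + 1))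
  refine ⟨part1, ?_⟩
  by_contra hno
  push_neg at hno
  have hstep : ∀ p : B × B, ∃ q, G.BetterReply p q := by
    intro p
    have := hno p
    rw [FPGame.IsPNE, not_and_or] at this
    rcases this with h | h
    · push_neg at h
      obtain ⟨b1', hb⟩ := h
      exact ⟨(b1', p.2), Or.inl ⟨rfl, hb⟩⟩
    · push_neg at h
      obtain ⟨b2', hb⟩ := h
      exact ⟨(p.1, b2'), Or.inr ⟨rfl, hb⟩⟩
  choose f hf using hstep
  have : Nonempty (B × B) := inferInstance
  refine part1 ⟨fun n => f^[n] (Classical.arbitrary _), fun n => ?_⟩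
  show G.BetterReply (f^[n] (Classical.arbitrary _)) (f^[n + 1] (Classical.arbitrary _))
  rw [Function.iterate_succ_apply']
  exact hf _
end

section
/- Every finite extensive-form bidding game with discrete bids (bids and budgets drawn from a finite set) admits a pure subgame-perfect equilibrium. -/
/-- A game tree for two-player bidding games: leaves carry utilities for both players. -/
inductive GTree where
  | leaf : ℝ → ℝ → GTree
  | node : List GTree → GTree

namespace GTree

/-- Height of a game tree. -/
def height : GTree → ℕ
  | .leaf _ _ => 0
  | .node [] => 1
  | .node (c :: cs) => max (1 + height c) (height (.node cs))

/-- The list of leaf payoff pairs of a game tree. -/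
def leaves : GTree → List (ℝ × ℝ)
  | .leaf a b => [(a, b)]
  | .node [] => []
  | .node (c :: cs) => leaves c ++ leaves (.node cs)

/-- Subtree relation. -/
inductive Subtree : GTree → GTree → Prop
  | refl (s : GTree) : Subtree s s
  | step {s c : GTree} {cs : List GTree} : c ∈ cs → Subtree s c → Subtree s (.node cs)

/-- A (Markov) strategy profile in the discrete-bid game: at each subgame and
integer budget of player 1, it gives the integer bids `(b1, b2)` and the indices
of the children each player would move to upon winning the round. -/
abbrev Profile := GTree → ℕ → ℕ × ℕ × ℕ × ℕ

/-- Play with explicit fuel. The higher bidder (ties to player 1) pays her bid to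
the other player and moves to her chosen child. -/
def playAux (γ : Profile) : ℕ → GTree → ℕ → ℝ × ℝ
  | _, .leaf u1 u2, _ => (u1, u2)
  | 0, .node _, _ => (0, 0)
  | n + 1, .node cs, B1 =>
      let a := γ (.node cs) B1
      if a.2.1 ≤ a.1 then
        playAux γ n (cs.getD a.2.2.1 (.leaf 0 0)) (B1 - a.1)
      else
        playAux γ n (cs.getD a.2.2.2 (.leaf 0 0)) (B1 + a.2.1)

/-- The outcome (utility pair at the reached leaf) from playing `γ` in `G` with
initial budget `B1` for player 1 (player 2 has `M - B1`). -/
def outcome (γ : Profile) (G : GTree) (B1 : ℕ) : ℝ × ℝ :=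
  playAux γ (height G) G B1

/-- Validity of an action tuple at a node with children `cs` under budget `B1`
out of total budget `M`. -/
def validAct (M : ℕ) (cs : List GTree) (B1 : ℕ) (a : ℕ × ℕ × ℕ × ℕ) : Prop :=
  a.1 ≤ B1 ∧ a.2.1 ≤ M - B1 ∧ a.2.2.1 < cs.length ∧ a.2.2.2 < cs.length

/-- Equilibrium conditions for an action tuple `a` at a node with children `cs`,
budget `B1` of player 1 out of total `M`, given that all subgames follow `γ`:
each player's designated move is optimal for her; the winner cannot gain by
winning with a different bid (and any move) nor by dropping the round; the loser
cannot gain by overbidding (with any move). -/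
def eqAct (M : ℕ) (γ : Profile) (cs : List GTree) (B1 : ℕ) (a : ℕ × ℕ × ℕ × ℕ) : Prop :=
  let b1 := a.1
  let b2 := a.2.1
  let c1 := cs.getD a.2.2.1 (.leaf 0 0)
  let c2 := cs.getD a.2.2.2 (.leaf 0 0)
  (∀ c ∈ cs, (outcome γ c (B1 - b1)).1 ≤ (outcome γ c1 (B1 - b1)).1) ∧
  (∀ c ∈ cs, (outcome γ c (B1 + b2)).2 ≤ (outcome γ c2 (B1 + b2)).2) ∧
  (if b2 ≤ b1 then
    (∀ b1', b1' ≤ B1 → b2 ≤ b1' → ∀ c ∈ cs,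
        (outcome γ c (B1 - b1')).1 ≤ (outcome γ c1 (B1 - b1)).1) ∧
    (0 < b2 → (outcome γ c2 (B1 + b2)).1 ≤ (outcome γ c1 (B1 - b1)).1) ∧
    (∀ b2', b2' ≤ M - B1 → b1 < b2' → ∀ c ∈ cs,
        (outcome γ c (B1 + b2')).2 ≤ (outcome γ c1 (B1 - b1)).2)
  else
    (∀ b2', b2' ≤ M - B1 → b1 < b2' → ∀ c ∈ cs,
        (outcome γ c (B1 + b2')).2 ≤ (outcome γ c2 (B1 + b2)).2) ∧
    ((outcome γ c1 (B1 - b1)).2 ≤ (outcome γ c2 (B1 + b2)).2) ∧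
    (∀ b1', b1' ≤ B1 → b2 ≤ b1' → ∀ c ∈ cs,
        (outcome γ c (B1 - b1')).1 ≤ (outcome γ c2 (B1 + b2)).1))

/-- `γ` is a pure subgame-perfect equilibrium of `G` with total budget `M`:
at every subgame and every budget partition `(B1, M - B1)` the prescribed actions
are valid and no player has a profitable unilateral deviation. -/
def IsPSPE (M : ℕ) (γ : Profile) (G : GTree) : Prop :=
  ∀ cs, Subtree (.node cs) G → ∀ B1 : ℕ, B1 ≤ M →
    validAct M cs B1 (γ (.node cs) B1) ∧ eqAct M γ cs B1 (γ (.node cs) B1)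

/-- Every internal node has at least one child. -/
def WF (G : GTree) : Prop := ∀ cs, Subtree (.node cs) G → cs ≠ []

/-- Every internal node has exactly two children. -/
def IsBinary (G : GTree) : Prop := ∀ cs, Subtree (.node cs) G → cs.length = 2

end GTree

open GTree

/-- `eqAct` with the equilibrium outcomes abstracted into a value function `v`. -/
def locEq (M : ℕ) (v : GTree → ℕ → ℝ × ℝ) (cs : List GTree) (B1 : ℕ)
    (a : ℕ × ℕ × ℕ × ℕ) : Prop :=
  let b1 := a.1
  let b2 := a.2.1
  let c1 := cs.getD a.2.2.1 (.leaf 0 0)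
  let c2 := cs.getD a.2.2.2 (.leaf 0 0)
  (∀ c ∈ cs, (v c (B1 - b1)).1 ≤ (v c1 (B1 - b1)).1) ∧
  (∀ c ∈ cs, (v c (B1 + b2)).2 ≤ (v c2 (B1 + b2)).2) ∧
  (if b2 ≤ b1 then
    (∀ b1', b1' ≤ B1 → b2 ≤ b1' → ∀ c ∈ cs,
        (v c (B1 - b1')).1 ≤ (v c1 (B1 - b1)).1) ∧
    (0 < b2 → (v c2 (B1 + b2)).1 ≤ (v c1 (B1 - b1)).1) ∧
    (∀ b2', b2' ≤ M - B1 → b1 < b2' → ∀ c ∈ cs,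
        (v c (B1 + b2')).2 ≤ (v c1 (B1 - b1)).2)
  else
    (∀ b2', b2' ≤ M - B1 → b1 < b2' → ∀ c ∈ cs,
        (v c (B1 + b2')).2 ≤ (v c2 (B1 + b2)).2) ∧
    ((v c1 (B1 - b1)).2 ≤ (v c2 (B1 + b2)).2) ∧
    (∀ b1', b1' ≤ B1 → b2 ≤ b1' → ∀ c ∈ cs,
        (v c (B1 - b1')).1 ≤ (v c2 (B1 + b2)).1))

private lemma exists_bids (B1 M2 : ℕ) (f1 f2 g1 g2 : ℕ → ℝ) :
    ∃ b1 b2, b1 ≤ B1 ∧ b2 ≤ M2 ∧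
      ((b2 ≤ b1 ∧ (∀ b1', b1' ≤ B1 → b2 ≤ b1' → f1 b1' ≤ f1 b1)
        ∧ (0 < b2 → g1 b2 ≤ f1 b1)
        ∧ (∀ b2', b2' ≤ M2 → b1 < b2' → f2 b2' ≤ g2 b1))
      ∨ (b1 < b2 ∧ (∀ b2', b2' ≤ M2 → b1 < b2' → f2 b2' ≤ f2 b2)
        ∧ g2 b1 ≤ f2 b2
        ∧ (∀ b1', b1' ≤ B1 → b2 ≤ b1' → f1 b1' ≤ g1 b2))) := by
  suffices H : ∀ n t, B1 - t = n → t ≤ B1 → t ≤ M2 →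
      (0 < t → ∃ w, t ≤ w ∧ w ≤ B1 ∧ g1 t ≤ f1 w) →
      ∃ b1 b2, t ≤ b1 ∧ b1 ≤ B1 ∧ b2 ≤ M2 ∧
      ((b2 ≤ b1 ∧ (∀ b1', b1' ≤ B1 → b2 ≤ b1' → f1 b1' ≤ f1 b1)
        ∧ (0 < b2 → g1 b2 ≤ f1 b1)
        ∧ (∀ b2', b2' ≤ M2 → b1 < b2' → f2 b2' ≤ g2 b1))
      ∨ (b1 < b2 ∧ (∀ b2', b2' ≤ M2 → b1 < b2' → f2 b2' ≤ f2 b2)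
        ∧ g2 b1 ≤ f2 b2
        ∧ (∀ b1', b1' ≤ B1 → b2 ≤ b1' → f1 b1' ≤ g1 b2))) by
    obtain ⟨b1, b2, _, h⟩ := H (B1 - 0) 0 rfl (Nat.zero_le _) (Nat.zero_le _) (by omega)
    exact ⟨b1, b2, h⟩
  intro n
  induction n using Nat.strong_induction_on with
  | _ n ih =>
    intro t hn htB htM hinv
    -- pick b1 : argmax of f1 on [t, B1]
    obtain ⟨b1, hb1mem, hb1max⟩ := Finset.exists_max_image (Finset.Icc t B1) f1
      ⟨t, Finset.mem_Icc.2 ⟨le_refl t, htB⟩⟩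
    rw [Finset.mem_Icc] at hb1mem
    have hmax1 : ∀ b1', t ≤ b1' → b1' ≤ B1 → f1 b1' ≤ f1 b1 := fun b' h1 h2 =>
      hb1max b' (Finset.mem_Icc.2 ⟨h1, h2⟩)
    by_cases h2 : ∀ b2', b2' ≤ M2 → b1 < b2' → f2 b2' ≤ g2 b1
    · -- Type 1 equilibrium (b1, t)
      refine ⟨b1, t, hb1mem.1, hb1mem.2, htM, Or.inl ⟨hb1mem.1, ?_, ?_, h2⟩⟩
      · intro b1' h1 h2'; exact hmax1 b1' h2' h1
      · intro ht0
        obtain ⟨w, hw1, hw2, hw3⟩ := hinv ht0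
        exact le_trans hw3 (hmax1 w hw1 hw2)
    · push_neg at h2
      obtain ⟨w2, hw2M, hw2gt, hw2val⟩ := h2
      -- pick b2 : argmax of f2 on [b1+1, M2]
      obtain ⟨b2, hb2mem, hb2max⟩ := Finset.exists_max_image (Finset.Icc (b1 + 1) M2) f2
        ⟨w2, Finset.mem_Icc.2 ⟨hw2gt, hw2M⟩⟩
      rw [Finset.mem_Icc] at hb2mem
      have hmax2 : ∀ b2', b2' ≤ M2 → b1 < b2' → f2 b2' ≤ f2 b2 := fun b' h1 h2 =>
        hb2max b' (Finset.mem_Icc.2 ⟨h2, h1⟩)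
      by_cases h3 : ∀ b1', b1' ≤ B1 → b2 ≤ b1' → f1 b1' ≤ g1 b2
      · -- Type 2 equilibrium (b1, b2)
        exact ⟨b1, b2, hb1mem.1, hb1mem.2, hb2mem.2,
          Or.inr ⟨hb2mem.1, hmax2, le_trans (le_of_lt hw2val) (hmax2 w2 hw2M hw2gt), h3⟩⟩
      · push_neg at h3
        obtain ⟨w1, hw1B, hw1ge, hw1val⟩ := h3
        have hb2B : b2 ≤ B1 := le_trans hw1ge hw1B
        have hlt : B1 - b2 < n := by omega
        obtain ⟨b1', b2', hge, hrest⟩ := ih (B1 - b2) hlt b2 rfl hb2B hb2mem.2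
          (fun _ => ⟨w1, hw1ge, hw1B, le_of_lt hw1val⟩)
        exact ⟨b1', b2', le_trans (le_trans hb1mem.1 (le_of_lt hb2mem.1)) hge, hrest⟩

private lemma getD_mem {cs : List GTree} {i : ℕ} (h : i < cs.length) (d : GTree) :
    cs.getD i d ∈ cs := by
  rw [List.getD_eq_getElem cs d h]
  exact List.getElem_mem h

private lemma exists_locEq (M : ℕ) (v : GTree → ℕ → ℝ × ℝ) (cs : List GTree) (B1 : ℕ)
    (hcs : cs ≠ []) :
    ∃ a, validAct M cs B1 a ∧ locEq M v cs B1 a := by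
  have hlen : 0 < cs.length := List.length_pos_iff.2 hcs
  set d : GTree := GTree.leaf 0 0 with hd
  -- argmax index functions for each player's value at each budget
  have hm1 : ∀ k : ℕ, ∃ i, i < cs.length ∧
      ∀ j, j < cs.length → (v (cs.getD j d) k).1 ≤ (v (cs.getD i d) k).1 := by
    intro k
    obtain ⟨i, hi, hmax⟩ := Finset.exists_max_image (Finset.range cs.length)
      (fun j => (v (cs.getD j d) k).1) ⟨0, Finset.mem_range.2 hlen⟩
    exact ⟨i, Finset.mem_range.1 hi, fun j hj => hmax j (Finset.mem_range.2 hj)⟩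
  have hm2 : ∀ k : ℕ, ∃ i, i < cs.length ∧
      ∀ j, j < cs.length → (v (cs.getD j d) k).2 ≤ (v (cs.getD i d) k).2 := by
    intro k
    obtain ⟨i, hi, hmax⟩ := Finset.exists_max_image (Finset.range cs.length)
      (fun j => (v (cs.getD j d) k).2) ⟨0, Finset.mem_range.2 hlen⟩
    exact ⟨i, Finset.mem_range.1 hi, fun j hj => hmax j (Finset.mem_range.2 hj)⟩
  set m1 : ℕ → ℕ := fun k => (hm1 k).choose with hm1def
  set m2 : ℕ → ℕ := fun k => (hm2 k).choose with hm2def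
  have m1lt : ∀ k, m1 k < cs.length := fun k => (hm1 k).choose_spec.1
  have m2lt : ∀ k, m2 k < cs.length := fun k => (hm2 k).choose_spec.1
  have m1spec : ∀ k, ∀ c ∈ cs, (v c k).1 ≤ (v (cs.getD (m1 k) d) k).1 := by
    intro k c hc
    obtain ⟨j, hj, rfl⟩ := List.getElem_of_mem hc
    rw [← List.getD_eq_getElem cs d hj]
    exact (hm1 k).choose_spec.2 j hj
  have m2spec : ∀ k, ∀ c ∈ cs, (v c k).2 ≤ (v (cs.getD (m2 k) d) k).2 := by
    intro k c hc
    obtain ⟨j, hj, rfl⟩ := List.getElem_of_mem hc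
    rw [← List.getD_eq_getElem cs d hj]
    exact (hm2 k).choose_spec.2 j hj
  -- reduced one-shot payoff functions
  set f1 : ℕ → ℝ := fun b => (v (cs.getD (m1 (B1 - b)) d) (B1 - b)).1 with hf1
  set g2 : ℕ → ℝ := fun b => (v (cs.getD (m1 (B1 - b)) d) (B1 - b)).2 with hg2
  set f2 : ℕ → ℝ := fun b => (v (cs.getD (m2 (B1 + b)) d) (B1 + b)).2 with hf2
  set g1 : ℕ → ℝ := fun b => (v (cs.getD (m2 (B1 + b)) d) (B1 + b)).1 with hg1
  obtain ⟨b1, b2, hb1B, hb2M, hcases⟩ := exists_bids B1 (M - B1) f1 f2 g1 g2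
  refine ⟨(b1, b2, m1 (B1 - b1), m2 (B1 + b2)), ⟨hb1B, hb2M, m1lt _, m2lt _⟩, ?_⟩
  unfold locEq
  simp only
  refine ⟨m1spec (B1 - b1), m2spec (B1 + b2), ?_⟩
  rcases hcases with ⟨hle, hA, hB, hC⟩ | ⟨hlt, hA, hB, hC⟩
  · rw [if_pos hle]
    refine ⟨?_, ?_, ?_⟩
    · intro b1' h1 h2 c hc
      exact le_trans (m1spec (B1 - b1') c hc) (hA b1' h1 h2)
    · exact hB
    · intro b2' h1 h2 c hc
      exact le_trans (m2spec (B1 + b2') c hc) (hC b2' h1 h2)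
  · rw [if_neg (not_le.2 hlt)]
    refine ⟨?_, hB, ?_⟩
    · intro b2' h1 h2 c hc
      exact le_trans (m2spec (B1 + b2') c hc) (hA b2' h1 h2)
    · intro b1' h1 h2 c hc
      exact le_trans (m1spec (B1 - b1') c hc) (hC b1' h1 h2)

/-- Choose an equilibrium action at a node, given children values `v`. -/
noncomputable def pick (M : ℕ) (v : GTree → ℕ → ℝ × ℝ) (cs : List GTree) (B1 : ℕ) :
    ℕ × ℕ × ℕ × ℕ :=
  match cs with
  | [] => (0, 0, 0, 0)
  | c :: cs' => (exists_locEq M v (c :: cs') B1 (by simp)).choose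

private lemma pick_spec (M : ℕ) (v : GTree → ℕ → ℝ × ℝ) (cs : List GTree) (B1 : ℕ)
    (h : cs ≠ []) :
    validAct M cs B1 (pick M v cs B1) ∧ locEq M v cs B1 (pick M v cs B1) := by
  match cs with
  | [] => exact absurd rfl h
  | c :: cs' => exact (exists_locEq M v (c :: cs') B1 (by simp)).choose_spec

private lemma sizeOf_mem_lt' {cs : List GTree} {c : GTree} (h : c ∈ cs) :
    sizeOf c < sizeOf (GTree.node cs) := by
  have := List.sizeOf_lt_of_mem h
  simp only [GTree.node.sizeOf_spec]
  omega

/-- Equilibrium value of a subgame. -/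
noncomputable def eval (M : ℕ) : GTree → ℕ → ℝ × ℝ
  | .leaf u1 u2, _ => (u1, u2)
  | .node cs, B1 =>
      let v : GTree → ℕ → ℝ × ℝ := fun c k =>
        if h : sizeOf c < sizeOf (GTree.node cs) then eval M c k else (0, 0)
      let a := pick M v cs B1
      if a.2.1 ≤ a.1 then
        v (cs.getD a.2.2.1 (.leaf 0 0)) (B1 - a.1)
      else
        v (cs.getD a.2.2.2 (.leaf 0 0)) (B1 + a.2.1)
termination_by G => sizeOf G
decreasing_by exact h

/-- The guarded children-value function used at a node. -/
noncomputable def vfun (M : ℕ) (cs : List GTree) : GTree → ℕ → ℝ × ℝ := fun c k =>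
  if h : sizeOf c < sizeOf (GTree.node cs) then eval M c k else (0, 0)

private lemma vfun_mem (M : ℕ) {cs : List GTree} {c : GTree} (h : c ∈ cs) (k : ℕ) :
    vfun M cs c k = eval M c k := by
  rw [vfun, dif_pos (sizeOf_mem_lt' h)]

private lemma eval_node (M : ℕ) (cs : List GTree) (B1 : ℕ) :
    eval M (.node cs) B1 =
      (let a := pick M (vfun M cs) cs B1
       if a.2.1 ≤ a.1 then
         vfun M cs (cs.getD a.2.2.1 (.leaf 0 0)) (B1 - a.1)
       else
         vfun M cs (cs.getD a.2.2.2 (.leaf 0 0)) (B1 + a.2.1)) := by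
  rw [eval]; rfl

/-- The equilibrium strategy profile. -/
noncomputable def strat (M : ℕ) : Profile := fun G B1 =>
  match G with
  | .leaf _ _ => (0, 0, 0, 0)
  | .node cs => pick M (vfun M cs) cs B1

private lemma subtree_trans : ∀ {a b c : GTree}, Subtree a b → Subtree b c → Subtree a c := by
  intro a b c hab hbc
  induction hbc with
  | refl => exact hab
  | step hmem _ ih => exact Subtree.step hmem ih

private lemma wf_child {cs : List GTree} {c : GTree} (h : c ∈ cs) (hwf : WF (.node cs)) :
    WF c := fun cs' hsub => hwf cs' (Subtree.step h hsub)

private lemma height_node_pos (cs : List GTree) : 1 ≤ height (GTree.node cs) := by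
  induction cs with
  | nil => simp [height]
  | cons c cs ih => simp only [height]; omega

private lemma height_child {cs : List GTree} {c : GTree} (h : c ∈ cs) :
    1 + height c ≤ height (GTree.node cs) := by
  induction cs with
  | nil => cases h
  | cons d ds ih =>
    rcases List.mem_cons.1 h with h | h
    · subst h; simp [height]
    · exact le_trans (ih h) (by simp [height])

/-- Consistency: playing the constructed strategy realizes the `eval` values. -/
private lemma consist (M : ℕ) : ∀ (n : ℕ) (G : GTree), height G ≤ n → WF G →
    ∀ B1, B1 ≤ M → playAux (strat M) n G B1 = eval M G B1 := by
  intro n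
  induction n with
  | zero =>
    intro G hh hwf B1 _
    match G with
    | .leaf u1 u2 => rw [playAux, eval]
    | .node cs => exact absurd (le_trans (height_node_pos cs) hh) (by omega)
  | succ n ih =>
    intro G hh hwf B1 hB1
    match G with
    | .leaf u1 u2 => rw [playAux, eval]
    | .node cs =>
      have hcs : cs ≠ [] := hwf cs (Subtree.refl _)
      have hγ : strat M (.node cs) B1 = pick M (vfun M cs) cs B1 := rfl
      obtain ⟨hval, -⟩ := pick_spec M (vfun M cs) cs B1 hcs
      rw [playAux, eval_node M cs B1]
      simp only [hγ]
      set a := pick M (vfun M cs) cs B1 with ha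
      by_cases hwin : a.2.1 ≤ a.1
      · rw [if_pos hwin, if_pos hwin]
        have hmem := getD_mem hval.2.2.1 (GTree.leaf 0 0)
        rw [vfun_mem M hmem]
        exact ih _ (by have := height_child hmem; omega) (wf_child hmem hwf) _ (by omega)
      · rw [if_neg hwin, if_neg hwin]
        have hmem := getD_mem hval.2.2.2 (GTree.leaf 0 0)
        rw [vfun_mem M hmem]
        refine ih _ (by have := height_child hmem; omega) (wf_child hmem hwf) _ ?_
        have : a.2.1 ≤ M - B1 := hval.2.1
        omega

/-- Transfer `locEq` along a pointwise (on relevant budgets) equality of values. -/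
private lemma locEq_congr (M : ℕ) (v v' : GTree → ℕ → ℝ × ℝ) (cs : List GTree) (B1 : ℕ)
    (a : ℕ × ℕ × ℕ × ℕ) (hB1 : B1 ≤ M) (hval : validAct M cs B1 a)
    (hv : ∀ c ∈ cs, ∀ k, k ≤ M → v c k = v' c k) :
    locEq M v cs B1 a → locEq M v' cs B1 a := by
  intro h
  unfold locEq at h ⊢
  have hc1 : cs.getD a.2.2.1 (.leaf 0 0) ∈ cs := getD_mem hval.2.2.1 _
  have hc2 : cs.getD a.2.2.2 (.leaf 0 0) ∈ cs := getD_mem hval.2.2.2 _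
  have hb1 : a.1 ≤ B1 := hval.1
  have hb2 : a.2.1 ≤ M - B1 := hval.2.1
  simp only at h ⊢
  obtain ⟨h1, h2, h3⟩ := h
  refine ⟨?_, ?_, ?_⟩
  · intro c hc
    rw [← hv c hc _ (by omega), ← hv _ hc1 _ (by omega)]; exact h1 c hc
  · intro c hc
    rw [← hv c hc _ (by omega), ← hv _ hc2 _ (by omega)]; exact h2 c hc
  · by_cases hcase : a.2.1 ≤ a.1
    · rw [if_pos hcase] at h3 ⊢
      obtain ⟨hA, hB, hC⟩ := h3
      refine ⟨?_, ?_, ?_⟩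
      · intro b1' k1 k2 c hc
        rw [← hv c hc _ (by omega), ← hv _ hc1 _ (by omega)]; exact hA b1' k1 k2 c hc
      · intro k
        rw [← hv _ hc2 _ (by omega), ← hv _ hc1 _ (by omega)]; exact hB k
      · intro b2' k1 k2 c hc
        rw [← hv c hc _ (by omega), ← hv _ hc1 _ (by omega)]; exact hC b2' k1 k2 c hc
    · rw [if_neg hcase] at h3 ⊢
      obtain ⟨hA, hB, hC⟩ := h3
      refine ⟨?_, ?_, ?_⟩
      · intro b2' k1 k2 c hc
        rw [← hv c hc _ (by omega), ← hv _ hc2 _ (by omega)]; exact hA b2' k1 k2 c hc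
      · rw [← hv _ hc1 _ (by omega), ← hv _ hc2 _ (by omega)]; exact hB
      · intro b1' k1 k2 c hc
        rw [← hv c hc _ (by omega), ← hv _ hc2 _ (by omega)]; exact hC b1' k1 k2 c hc

/-- Every finite extensive-form bidding game with discrete bids
(integer bids and budgets summing to a fixed total `M`) admits a pure
subgame-perfect equilibrium. -/
theorem stmt3 (G : GTree) (hWF : WF G) (M : ℕ) :
    ∃ γ : Profile, IsPSPE M γ G := by
  refine ⟨strat M, ?_⟩
  intro cs hsub B1 hB1
  have hcs : cs ≠ [] := hWF cs hsub
  have hγ : strat M (.node cs) B1 = pick M (vfun M cs) cs B1 := rfl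
  obtain ⟨hval, hloc⟩ := pick_spec M (vfun M cs) cs B1 hcs
  rw [hγ]
  refine ⟨hval, ?_⟩
  have hwfnode : WF (GTree.node cs) := fun cs' hsub' => hWF cs' (subtree_trans hsub' hsub)
  have hv : ∀ c ∈ cs, ∀ k, k ≤ M → vfun M cs c k = outcome (strat M) c k := by
    intro c hc k hk
    rw [vfun_mem M hc, outcome]
    exact (consist M (height c) c le_rfl (wf_child hc hwfnode) k hk).symm
  exact locEq_congr M (vfun M cs) (outcome (strat M)) cs B1 _ hB1 hval hv hloc
end

section
/- For every k ∈ ℕ there is a binary bidding game G_k such that, when G_k is played with discrete integer budgets summing to M < 2^k, no pure subgame-perfect equilibrium of G_k is Pareto-optimal: for some budget partitions the equilibrium outcome is strictly Pareto-dominated. -/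
/-! In `game n`, player 2 can reach the leaf `(2, 2)` only by winning all `n` auctions along
`chain n`, because player 1, whenever he wins one, stops at `(3, 0)`. Player 2 must therefore
outbid player 1's whole budget `x` each time (otherwise player 1 would match her bid and stop),
which turns `x` into at least `2x + 1`; this is impossible when `M + 1 < 2 ^ n`. So entering
the chain gives player 2 the payoff `0`, and when player 1 holds no budget at the root she
takes the leaf `(1, 1)`, which `(2, 2)` strictly dominates. -/

theorem List.getD_mem {α : Type*} {l : List α} {i : ℕ} (hi : i < l.length) (d : α) :
    l.getD i d ∈ l := by
  rw [List.getD_eq_getElem _ _ hi]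
  exact List.getElem_mem hi

namespace GTree

theorem Subtree.trans {s t u : GTree} (hst : Subtree s t) (htu : Subtree t u) : Subtree s u := by
  induction htu with
  | refl => exact hst
  | step hmem _ ih => exact .step hmem ih

theorem height_lt_of_mem {c : GTree} {cs : List GTree} (hc : c ∈ cs) :
    height c < height (.node cs) := by
  induction cs with
  | nil => cases hc
  | cons d ds ih =>
    simp only [height]
    rcases List.mem_cons.mp hc with rfl | hc
    · omega
    · have := ih hc; omega

theorem one_le_height_node (cs : List GTree) : 1 ≤ height (.node cs) := by
  cases cs with
  | nil => simp [height]
  | cons c cs => simp only [height]; omega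

theorem height_getD_lt (cs : List GTree) (i : ℕ) :
    height (cs.getD i (.leaf 0 0)) < height (.node cs) := by
  by_cases hi : i < cs.length
  · rw [List.getD_eq_getElem _ _ hi]
    exact height_lt_of_mem (List.getElem_mem hi)
  · rw [List.getD_eq_default _ _ (not_lt.mp hi)]
    simp only [height]
    exact one_le_height_node cs

theorem playAux_fuel_congr (γ : Profile) {t : GTree} {m n : ℕ} (hm : height t ≤ m)
    (hn : height t ≤ n) (B : ℕ) : playAux γ m t B = playAux γ n t B := by
  induction m generalizing t n B with
  | zero =>
    cases t with
    | leaf => cases n <;> rfl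
    | node cs => have := one_le_height_node cs; omega
  | succ m ih =>
    cases t with
    | leaf => cases n <;> rfl
    | node cs =>
      obtain ⟨n, rfl⟩ : ∃ n', n = n' + 1 := ⟨n - 1, by have := one_le_height_node cs; omega⟩
      simp only [playAux]
      split_ifs <;> exact ih (Nat.le_of_lt_succ ((height_getD_lt cs _).trans_le hm))
        (Nat.le_of_lt_succ ((height_getD_lt cs _).trans_le hn)) _

theorem outcome_leaf (γ : Profile) (u v : ℝ) (B : ℕ) : outcome γ (.leaf u v) B = (u, v) := by
  simp [outcome, playAux]

theorem outcome_node (γ : Profile) (cs : List GTree) (B : ℕ) :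
    outcome γ (.node cs) B =
      let a := γ (.node cs) B
      if a.2.1 ≤ a.1 then outcome γ (cs.getD a.2.2.1 (.leaf 0 0)) (B - a.1)
      else outcome γ (cs.getD a.2.2.2 (.leaf 0 0)) (B + a.2.1) := by
  obtain ⟨h, hh⟩ : ∃ h, height (.node cs) = h + 1 :=
    ⟨_, (Nat.succ_pred_eq_of_pos (one_le_height_node cs)).symm⟩
  have hfuel (i B' : ℕ) : playAux γ h (cs.getD i (.leaf 0 0)) B' =
      outcome γ (cs.getD i (.leaf 0 0)) B' :=
    playAux_fuel_congr γ (by have := height_getD_lt cs i; omega) le_rfl B'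
  rw [outcome, hh]
  simp only [playAux, hfuel]

section IsPSPE

variable {M B : ℕ} {γ : Profile} {G : GTree}

theorem IsPSPE.subgame (hγ : IsPSPE M γ G) {H : GTree} (hH : Subtree H G) : IsPSPE M γ H :=
  fun cs hcs B hB => hγ cs (hcs.trans hH) B hB

theorem IsPSPE.child {cs : List GTree} (hγ : IsPSPE M γ (.node cs)) {c : GTree} (hc : c ∈ cs) :
    IsPSPE M γ c :=
  hγ.subgame (.step hc (.refl c))

theorem IsPSPE.outcome_node_cases {cs : List GTree} (hγ : IsPSPE M γ (.node cs)) (hB : B ≤ M) :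
    (∃ b ≤ B, ∃ c ∈ cs, outcome γ (.node cs) B = outcome γ c (B - b) ∧
      (∀ c' ∈ cs, (outcome γ c' (B - b)).1 ≤ (outcome γ (.node cs) B).1) ∧
      ∀ b' ≤ M - B, b < b' → ∀ c' ∈ cs,
        (outcome γ c' (B + b')).2 ≤ (outcome γ (.node cs) B).2) ∨
    (∃ b ≤ M - B, ∃ c ∈ cs, outcome γ (.node cs) B = outcome γ c (B + b) ∧
      (∀ c' ∈ cs, (outcome γ c' (B + b)).2 ≤ (outcome γ (.node cs) B).2) ∧
      ∀ b' ≤ B, b ≤ b' → ∀ c' ∈ cs,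
        (outcome γ c' (B - b')).1 ≤ (outcome γ (.node cs) B).1) := by
  obtain ⟨⟨hb₁, hb₂, hi₁, hi₂⟩, hbest₁, hbest₂, hdev⟩ := hγ cs (.refl _) B hB
  rw [outcome_node]
  by_cases hwin : (γ (.node cs) B).2.1 ≤ (γ (.node cs) B).1
  · rw [if_pos hwin] at hdev ⊢
    exact .inl ⟨_, hb₁, _, List.getD_mem hi₁ _, rfl, hbest₁, hdev.2.2⟩
  · rw [if_neg hwin] at hdev ⊢
    exact .inr ⟨_, hb₂, _, List.getD_mem hi₂ _, rfl, hbest₂, hdev.2.2⟩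

end IsPSPE

theorem isBinary_leaf (u v : ℝ) : IsBinary (.leaf u v) := fun _ h => nomatch h

theorem isBinary_node {cs : List GTree} (hlen : cs.length = 2) (hcs : ∀ c ∈ cs, IsBinary c) :
    IsBinary (.node cs) := by
  rintro ds (_ | ⟨hc, hsub⟩)
  · exact hlen
  · exact hcs _ hc _ hsub

theorem IsBinary.wf {G : GTree} (hG : IsBinary G) : WF G := fun cs hcs hnil => by
  simpa [hnil] using hG cs hcs

theorem leaves_subset_of_mem {c : GTree} {cs : List GTree} (hc : c ∈ cs) :
    leaves c ⊆ leaves (.node cs) := by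
  induction cs with
  | nil => cases hc
  | cons d ds ih =>
    simp only [leaves]
    rcases List.mem_cons.mp hc with rfl | hc
    · exact List.subset_append_left _ _
    · exact fun _ hx => List.mem_append_right _ (ih hc hx)

def chain : ℕ → GTree
  | 0 => .leaf 2 2
  | j + 1 => .node [chain j, .leaf 3 0]

def game (n : ℕ) : GTree := .node [chain n, .leaf 1 1]

theorem isBinary_chain (j : ℕ) : IsBinary (chain j) := by
  induction j with
  | zero => exact isBinary_leaf 2 2
  | succ j ih => exact isBinary_node rfl (by simpa using ⟨ih, isBinary_leaf 3 0⟩)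

theorem isBinary_game (n : ℕ) : IsBinary (game n) :=
  isBinary_node rfl (by simpa using ⟨isBinary_chain n, isBinary_leaf 1 1⟩)

theorem mem_leaves_chain (j : ℕ) : ((2 : ℝ), (2 : ℝ)) ∈ leaves (chain j) := by
  induction j with
  | zero => simp [chain, leaves]
  | succ j ih => exact leaves_subset_of_mem (by simp) ih

theorem mem_leaves_game (n : ℕ) : ((2 : ℝ), (2 : ℝ)) ∈ leaves (game n) :=
  leaves_subset_of_mem (by simp) (mem_leaves_chain n)

section Equilibrium

variable {M : ℕ} {γ : Profile}

/-- The invariant `2 ^ j * (x + 1) ≤ M + 1` records that reaching the end of the chain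
needs `j` wins, each of which at least doubles `x + 1`. -/
theorem IsPSPE.outcome_chain {j : ℕ} (hγ : IsPSPE M γ (chain j)) {x : ℕ} (hx : x ≤ M) :
    outcome γ (chain j) x = (3, 0) ∨
      (outcome γ (chain j) x = (2, 2) ∧ 2 ^ j * (x + 1) ≤ M + 1) := by
  induction j generalizing x with
  | zero => exact .inr ⟨outcome_leaf γ 2 2 x, by simpa using hx⟩
  | succ j ih =>
    have hγ' : IsPSPE M γ (.node [chain j, .leaf 3 0]) := hγ
    have hchild : ∀ c ∈ [chain j, .leaf 3 0], ∀ y ≤ M, outcome γ c y = (3, 0) ∨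
        (outcome γ c y = (2, 2) ∧ 2 ^ j * (y + 1) ≤ M + 1) := by
      simp only [List.mem_cons, List.not_mem_nil, or_false]
      rintro c (rfl | rfl) y hy
      · exact ih (hγ'.child (by simp)) hy
      · exact .inl (outcome_leaf γ 3 0 y)
    show outcome γ (.node [chain j, .leaf 3 0]) x = (3, 0) ∨
      (outcome γ (.node [chain j, .leaf 3 0]) x = (2, 2) ∧ 2 ^ (j + 1) * (x + 1) ≤ M + 1)
    rcases hγ'.outcome_node_cases hx with
      ⟨b, -, c, hc, hout, hbest, -⟩ | ⟨b, hb, c, hc, hout, -, hdev⟩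
    · have hstop := hbest (.leaf 3 0) (by simp)
      rw [outcome_leaf, hout] at hstop
      rcases hchild c hc (x - b) (by omega) with h | ⟨h, -⟩
      · exact .inl (hout.trans h)
      · rw [h] at hstop; norm_num at hstop
    · rcases hchild c hc (x + b) (by omega) with h | ⟨h, hbound⟩
      · exact .inl (hout.trans h)
      · have hxb : x < b := by
          by_contra! hbx
          have hmatch := hdev b hbx le_rfl (.leaf 3 0) (by simp)
          rw [outcome_leaf, hout, h] at hmatch
          norm_num at hmatch
        refine .inr ⟨hout.trans h, ?_⟩
        calc 2 ^ (j + 1) * (x + 1) = 2 ^ j * (2 * (x + 1)) := by ring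
          _ ≤ 2 ^ j * (x + b + 1) := by gcongr; omega
          _ ≤ M + 1 := hbound

theorem IsPSPE.outcome_chain_of_lt {j : ℕ} (hγ : IsPSPE M γ (chain j)) (hM : M + 1 < 2 ^ j)
    {x : ℕ} (hx : x ≤ M) : outcome γ (chain j) x = (3, 0) :=
  (hγ.outcome_chain hx).resolve_right fun ⟨_, hbound⟩ => by
    have : 2 ^ j ≤ 2 ^ j * (x + 1) := Nat.le_mul_of_pos_right _ (by omega)
    omega

theorem IsPSPE.outcome_game_zero {n : ℕ} (hγ : IsPSPE M γ (game n)) (hM : 0 < M)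
    (hMn : M + 1 < 2 ^ n) : outcome γ (game n) 0 = (1, 1) := by
  unfold game at hγ ⊢
  have hchild : ∀ c ∈ [chain n, .leaf 1 1], ∀ y ≤ M,
      outcome γ c y = (3, 0) ∨ outcome γ c y = (1, 1) := by
    simp only [List.mem_cons, List.not_mem_nil, or_false]
    rintro c (rfl | rfl) y hy
    · exact .inl ((hγ.child (by simp)).outcome_chain_of_lt hMn hy)
    · exact .inr (outcome_leaf γ 1 1 y)
  -- player 2 secures the leaf `(1, 1)` either by her own choice or by outbidding the broke player 1
  obtain ⟨c, hc, y, hy, hout, hsecure⟩ : ∃ c ∈ [chain n, .leaf 1 1], ∃ y ≤ M,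
      outcome γ (.node [chain n, .leaf 1 1]) 0 = outcome γ c y ∧
        1 ≤ (outcome γ (.node [chain n, .leaf 1 1]) 0).2 := by
    rcases hγ.outcome_node_cases (Nat.zero_le M) with
      ⟨b, hb, c, hc, hout, -, hdev⟩ | ⟨b, hb, c, hc, hout, hbest, -⟩
    · exact ⟨c, hc, 0 - b, by omega, hout,
        by simpa [outcome_leaf] using hdev 1 (by omega) (by omega) (.leaf 1 1) (by simp)⟩
    · exact ⟨c, hc, 0 + b, by omega, hout,
        by simpa [outcome_leaf] using hbest (.leaf 1 1) (by simp)⟩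
  rcases hchild c hc y hy with h | h <;> rw [hout, h] at hsecure ⊢
  norm_num at hsecure

end Equilibrium

end GTree

open GTree

/-- For every `k` there is a binary bidding game `G_k` such
that, when played with discrete integer budgets summing to any positive `M < 2^k`,
no pure subgame-perfect equilibrium is Pareto-optimal: every PSPE has, for some
budget partition, an outcome that is strictly Pareto-dominated by some leaf. -/
theorem stmt10 (k : ℕ) :
    ∃ G : GTree, WF G ∧ IsBinary G ∧
      ∀ M : ℕ, 0 < M → M < 2 ^ k →
        ∀ γ : Profile, IsPSPE M γ G →
          ∃ B1 ≤ M, ∃ t' ∈ leaves G,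
            (outcome γ G B1).1 < t'.1 ∧ (outcome γ G B1).2 < t'.2 := by
  refine ⟨game (k + 1), (isBinary_game _).wf, isBinary_game _, fun M hM hMk γ hγ => ?_⟩
  have hMk' : M + 1 < 2 ^ (k + 1) := by rw [pow_succ]; omega
  refine ⟨0, Nat.zero_le M, (2, 2), mem_leaves_game _, ?_⟩
  rw [hγ.outcome_game_zero hM hMk']
  norm_num
end
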